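/- Let X be a real Banach space, x* ∈ S_{X*}, t > 1, and let K(t,x*) = {x ∈ X : ‖x‖ ≤ t·x*(x)}. Suppose y* ∈ S_{X*} satisfies y*(K(t,x*)) ⊆ [0,∞). Then x*(w) ≤ 1/t for every w ∈ ker y* ∩ S_X, and consequently min{‖x* - y*‖, ‖x* + y*‖} ≤ 2/t. -/

import Mathlib

/-!
If `x*` exceeded `1/t` at a unit vector `w ∈ ker y*`, then `v + s • w` would lie in the cone
`K(t,x*)` for every `v` once `s` is large, and `y*(v + s • w) = y*(v)`; so `y* ≥ 0` everywhere,
i.e. `y* = 0`. Hence `x*` restricted to `ker y*` has norm at most `1/t`; by Hahn–Banach this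
restriction extends to some `g` of the same norm, and `x* - g` vanishes on `ker y*`, so it equals
`c • y*`. Finally `‖x* - c • y*‖ ≤ 1/t` and `‖x*‖ = ‖y*‖ = 1` give `||c| - 1| ≤ 1/t`, hence
`‖x* - (sign c) • y*‖ ≤ 2/t`.
-/

section

variable {E : Type*} [NormedAddCommGroup E] [NormedSpace ℝ E]

def bishopPhelpsCone (f : StrongDual ℝ E) (t : ℝ) : Set E :=
  {x | ‖x‖ ≤ t * f x}

theorem eq_zero_of_nonneg_on_bishopPhelpsCone {f y : StrongDual ℝ E} {t : ℝ}
    (h : ∀ v ∈ bishopPhelpsCone f t, 0 ≤ y v) {w : E} (hw : y w = 0) (hlt : ‖w‖ < t * f w) :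
    y = 0 := by
  have hnonneg : ∀ v, 0 ≤ y v := by
    intro v
    have ha : 0 < t * f w - ‖w‖ := sub_pos.mpr hlt
    set s := |‖v‖ - t * f v| / (t * f w - ‖w‖)
    have hs : 0 ≤ s := by positivity
    have hsa : s * (t * f w - ‖w‖) = |‖v‖ - t * f v| := div_mul_cancel₀ _ ha.ne'
    have hmem : v + s • w ∈ bishopPhelpsCone f t :=
      calc ‖v + s • w‖ ≤ ‖v‖ + s * ‖w‖ := by
            simpa [norm_smul, abs_of_nonneg hs] using norm_add_le v (s • w)
        _ ≤ t * f v + s * (t * f w) := by nlinarith [le_abs_self (‖v‖ - t * f v)]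
        _ = t * f (v + s • w) := by simp only [map_add, map_smul, smul_eq_mul]; ring
    simpa [hw] using h _ hmem
  ext v
  rw [zero_apply]
  have := hnonneg (-v)
  rw [map_neg] at this
  exact le_antisymm (by linarith) (hnonneg v)

theorem mul_abs_apply_le_norm_of_nonneg_on_bishopPhelpsCone {f y : StrongDual ℝ E} {t : ℝ}
    (h : ∀ v ∈ bishopPhelpsCone f t, 0 ≤ y v) (hy : y ≠ 0) {w : E} (hw : y w = 0) :
    t * |f w| ≤ ‖w‖ := by
  rcases abs_cases (f w) with ⟨habs, -⟩ | ⟨habs, -⟩ <;> rw [habs] <;> by_contra! hlt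
  · exact hy (eq_zero_of_nonneg_on_bishopPhelpsCone h hw hlt)
  · refine hy (eq_zero_of_nonneg_on_bishopPhelpsCone h (w := -w) (by simpa) ?_)
    simpa using hlt

theorem exists_eq_smul_of_forall_ker {f y : StrongDual ℝ E} (hy : y ≠ 0)
    (h : ∀ w, y w = 0 → f w = 0) : ∃ c : ℝ, f = c • y := by
  obtain ⟨u, hu⟩ : ∃ u, y u = 1 := by
    obtain ⟨v, hv⟩ : ∃ v, y v ≠ 0 := by
      by_contra! hv
      exact hy (ContinuousLinearMap.ext hv)
    exact ⟨(y v)⁻¹ • v, by simp [hv]⟩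
  refine ⟨f u, ContinuousLinearMap.ext fun x => ?_⟩
  have := h (x - y x • u) (by simp [hu])
  simp only [map_sub, map_smul, smul_eq_mul] at this
  simp only [FunLike.coe_smul, Pi.smul_apply, smul_eq_mul]
  linarith

theorem exists_norm_sub_smul_le_of_forall_ker {f y : StrongDual ℝ E} (hy : y ≠ 0) {ε : ℝ}
    (hε : 0 ≤ ε) (h : ∀ w, y w = 0 → |f w| ≤ ε * ‖w‖) : ∃ c : ℝ, ‖f - c • y‖ ≤ ε := by
  let p := LinearMap.ker (y : E →ₗ[ℝ] ℝ)
  obtain ⟨g, hgf, hg⟩ := exists_extension_norm_eq p (f.comp p.subtypeL)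
  obtain ⟨c, hc⟩ : ∃ c : ℝ, f - g = c • y :=
    exists_eq_smul_of_forall_ker hy fun w hw => by
      simpa [sub_eq_zero] using (hgf ⟨w, hw⟩).symm
  refine ⟨c, ?_⟩
  rw [← hc, sub_sub_cancel, hg]
  exact ContinuousLinearMap.opNorm_le_bound _ hε fun w => h w w.2

theorem norm_sub_le_two_mul_of_norm_sub_smul_le {x y : E} (hx : ‖x‖ = 1) (hy : ‖y‖ = 1)
    {c ε : ℝ} (hc : 0 ≤ c) (h : ‖x - c • y‖ ≤ ε) : ‖x - y‖ ≤ 2 * ε := by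
  have hc1 : |c - 1| ≤ ε := by
    have := (abs_norm_sub_norm_le (c • y) x).trans ((norm_sub_rev _ _).trans_le h)
    rwa [norm_smul, hy, hx, Real.norm_of_nonneg hc, mul_one] at this
  calc ‖x - y‖ = ‖(x - c • y) + (c - 1) • y‖ := by congr 1; module
    _ ≤ ‖x - c • y‖ + |c - 1| := by
        simpa [norm_smul, hy] using norm_add_le (x - c • y) ((c - 1) • y)
    _ ≤ 2 * ε := by linarith

theorem min_norm_sub_norm_add_le_of_norm_sub_smul_le {x y : E} (hx : ‖x‖ = 1) (hy : ‖y‖ = 1)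
    {c ε : ℝ} (h : ‖x - c • y‖ ≤ ε) : min ‖x - y‖ ‖x + y‖ ≤ 2 * ε := by
  rcases le_or_gt 0 c with hc | hc
  · exact (min_le_left _ _).trans (norm_sub_le_two_mul_of_norm_sub_smul_le hx hy hc h)
  · refine (min_le_right _ _).trans ?_
    have h' : ‖x - (-c) • -y‖ ≤ ε := by rwa [neg_smul_neg]
    simpa using norm_sub_le_two_mul_of_norm_sub_smul_le hx (by rwa [norm_neg]) (by linarith) h'

end

theorem bishop_phelps_cone_lemma_general
    (X : Type*) [NormedAddCommGroup X] [NormedSpace ℝ X]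
    (xstar ystar : X →L[ℝ] ℝ) (hx : ‖xstar‖ = 1) (hy : ‖ystar‖ = 1)
    (t : ℝ) (ht : 1 < t)
    (h : ∀ x : X, ‖x‖ ≤ t * xstar x → 0 ≤ ystar x) :
    (∀ w : X, ystar w = 0 → ‖w‖ = 1 → xstar w ≤ 1 / t) ∧
      min ‖xstar - ystar‖ ‖xstar + ystar‖ ≤ 2 / t := by
  have ht0 : 0 < t := one_pos.trans ht
  have hy0 : ystar ≠ 0 := by rintro rfl; simp at hy
  have hker : ∀ w, ystar w = 0 → |xstar w| ≤ 1 / t * ‖w‖ := fun w hw => by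
    rw [one_div_mul_eq_div, le_div_iff₀' ht0]
    exact mul_abs_apply_le_norm_of_nonneg_on_bishopPhelpsCone h hy0 hw
  refine ⟨fun w hw hw1 => (le_abs_self _).trans (by simpa [hw1] using hker w hw), ?_⟩
  obtain ⟨c, hc⟩ := exists_norm_sub_smul_le_of_forall_ker hy0 (by positivity) hker
  rw [← mul_one_div]
  exact min_norm_sub_norm_add_le_of_norm_sub_smul_le hx hy hc

/-- If `y*` is nonnegative on the Bishop-Phelps cone `K(t,x*)`, then `x*` is
at most `1/t` on the unit sphere of `ker y*` and `min{‖x*-y*‖,‖x*+y*‖} ≤ 2/t`. -/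
theorem bishop_phelps_cone_lemma
    (X : Type*) [NormedAddCommGroup X] [NormedSpace ℝ X] [CompleteSpace X]
    (xstar ystar : X →L[ℝ] ℝ) (hx : ‖xstar‖ = 1) (hy : ‖ystar‖ = 1)
    (t : ℝ) (ht : 1 < t)
    (h : ∀ x : X, ‖x‖ ≤ t * xstar x → 0 ≤ ystar x) :
    (∀ w : X, ystar w = 0 → ‖w‖ = 1 → xstar w ≤ 1 / t) ∧
      min ‖xstar - ystar‖ ‖xstar + ystar‖ ≤ 2 / t :=
  bishop_phelps_cone_lemma_general X xstar ystar hx hy t ht h
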